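/- Let G be a finite connected graph and suppose the commute time satisfies κ(i,j) = 2|E| ∑_{k=2}^N (1/(1-λ_k)) (v_{kj}/√d_j - v_{ki}/√d_i)^2 with 0 < 1-λ_k and |λ_k| ≤ |λ_2| < 1 for all k ≥ 2. Then |E| (1/d_i + 1/d_j) ≤ κ(i,j) ≤ (2|E|/(1-λ_2)) (1/d_i + 1/d_j). -/

import Mathlib

open Finset

/-- Spectral bounds on the commute time:
|E|(1/dᵢ + 1/dⱼ) ≤ κ(i,j) ≤ (2|E|/(1-λ₂))(1/dᵢ + 1/dⱼ). -/
theorem commute_time_bounds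
    (N : ℕ) (lam : ℕ → ℝ) (vi vj : ℕ → ℝ) (di dj E kappa : ℝ)
    (hdi : 0 < di) (hdj : 0 < dj) (hE : 0 < E)
    (hord : ∀ k ∈ Finset.Icc 2 N, lam k ≤ lam 2)
    (habs : ∀ k ∈ Finset.Icc 2 N, |lam k| ≤ |lam 2|)
    (h2 : |lam 2| < 1)
    (hv1i : vi 1 = Real.sqrt (di / (2 * E))) (hv1j : vj 1 = Real.sqrt (dj / (2 * E)))
    (hcols : ∑ k ∈ Finset.Icc 1 N,
      (vj k / Real.sqrt dj - vi k / Real.sqrt di) ^ 2 = 1 / di + 1 / dj)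
    (hkappa : kappa = 2 * E * ∑ k ∈ Finset.Icc 2 N,
      (1 / (1 - lam k)) * (vj k / Real.sqrt dj - vi k / Real.sqrt di) ^ 2) :
    E * (1 / di + 1 / dj) ≤ kappa ∧
      kappa ≤ (2 * E / (1 - lam 2)) * (1 / di + 1 / dj) := by
  set w : ℕ → ℝ := fun k => (vj k / Real.sqrt dj - vi k / Real.sqrt di) ^ 2 with hw
  have hwnn : ∀ k, 0 ≤ w k := fun k => sq_nonneg _
  have h2E : (0:ℝ) < 2 * E := by linarith
  -- term at k = 1 vanishes
  have hterm1 : (vj 1 / Real.sqrt dj - vi 1 / Real.sqrt di) ^ 2 = 0 := by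
    have h1 : vj 1 / Real.sqrt dj = 1 / Real.sqrt (2 * E) := by
      rw [hv1j, Real.sqrt_div hdj.le]
      field_simp [Real.sqrt_ne_zero'.mpr hdj]
    have h2' : vi 1 / Real.sqrt di = 1 / Real.sqrt (2 * E) := by
      rw [hv1i, Real.sqrt_div hdi.le]
      field_simp [Real.sqrt_ne_zero'.mpr hdi]
    simp [h1, h2']
  -- sum over Icc 2 N equals 1/di + 1/dj
  have hS : ∑ k ∈ Finset.Icc 2 N, w k = 1 / di + 1 / dj := by
    rcases le_or_gt 1 N with hN | hN
    · have hsplit : Finset.Icc 1 N = (Finset.Ioc 1 N).cons 1 (by simp) :=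
        Finset.Icc_eq_cons_Ioc hN
      have : Finset.Ioc 1 N = Finset.Icc 2 N := (Finset.Icc_add_one_left_eq_Ioc 1 N).symm
      rw [hsplit] at hcols
      simp only [hw] at hcols ⊢
      rw [Finset.sum_cons, hterm1, zero_add, this] at hcols
      exact hcols
    · interval_cases N <;> simpa using hcols
  have hlam2 : lam 2 < 1 := lt_of_le_of_lt (le_abs_self _) h2
  have hpos2 : (0:ℝ) < 1 - lam 2 := by linarith
  constructor
  · -- lower bound
    have : E * (1 / di + 1 / dj) = 2 * E * ∑ k ∈ Finset.Icc 2 N, (1/2) * w k := by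
      rw [← Finset.mul_sum, ← mul_assoc, hS]; ring
    rw [this, hkappa]
    apply mul_le_mul_of_nonneg_left _ h2E.le
    apply Finset.sum_le_sum
    intro k hk
    have habs' := habs k hk
    have hk1 : -1 < lam k := by
      have := neg_abs_le (lam k); linarith
    have hk2 : lam k < 1 := by
      have := le_abs_self (lam k); linarith
    have hpos : (0:ℝ) < 1 - lam k := by linarith
    have : (1:ℝ)/2 ≤ 1 / (1 - lam k) := by
      rw [div_le_div_iff₀ (by norm_num) hpos]; linarith
    exact mul_le_mul_of_nonneg_right this (hwnn k)
  · -- upper bound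
    have heq : (2 * E / (1 - lam 2)) * (1 / di + 1 / dj)
        = 2 * E * ∑ k ∈ Finset.Icc 2 N, (1 / (1 - lam 2)) * w k := by
      rw [← Finset.mul_sum, ← mul_assoc, hS]; ring
    rw [heq, hkappa]
    apply mul_le_mul_of_nonneg_left _ h2E.le
    apply Finset.sum_le_sum
    intro k hk
    have hord' := hord k hk
    have hposk : (0:ℝ) < 1 - lam k := by
      have := le_abs_self (lam k); have := habs k hk; linarith
    have : (1:ℝ) / (1 - lam k) ≤ 1 / (1 - lam 2) := by
      rw [div_le_div_iff₀ hposk hpos2]; linarith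
    exact mul_le_mul_of_nonneg_right this (hwnn k)
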